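/- arXiv:2205.09721 — 2 statements merged into one kernel-verified Lean document; each statement's English description precedes it below -/
import Mathlib

section
/- The shortest-path metric of a weighted tree satisfies the four-point condition: for any four vertices x, y, z, r of a tree with nonnegative edge weights, d(x,y) + d(z,r) ≤ max{d(x,z) + d(y,r), d(x,r) + d(y,z)}, where d is the weighted shortest-path distance. -/
open SimpleGraph Walk

private lemma list_map_sum_le {α : Type*} (w : α → ℝ) (hw : ∀ e, 0 ≤ w e)
    {l₁ l₂ : List α} (hn : l₁.Nodup) (hs : l₁ ⊆ l₂) :
    (l₁.map w).sum ≤ (l₂.map w).sum := by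
  obtain ⟨l, hperm, hsub⟩ := hn.subperm hs
  have h1 : (l.map w).sum = (l₁.map w).sum := (hperm.map w).sum_eq
  have h2 : (l.map w).sum ≤ (l₂.map w).sum := by
    have hsub' := (hsub.map w).subperm
    obtain ⟨u, hu⟩ := Multiset.le_iff_exists_add.mp (Multiset.coe_le.mpr hsub')
    have hu0 : 0 ≤ u.sum := Multiset.sum_nonneg (by
      intro x hx
      have : x ∈ ((l₂.map w : List ℝ) : Multiset ℝ) := by
        rw [hu]; exact Multiset.mem_add.mpr (Or.inr hx)
      obtain ⟨e, he, rfl⟩ := List.mem_map.mp (by simpa using this)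
      exact hw e)
    have := congrArg Multiset.sum hu
    simp only [Multiset.sum_add, Multiset.sum_coe] at this
    linarith
  linarith

/-- The shortest-path metric of a weighted tree (distances given by summing the
nonnegative edge weights along the unique path) satisfies the four-point condition. -/
theorem weighted_tree_four_point {V : Type*} (G : SimpleGraph V) (hG : G.IsTree)
    (w : Sym2 V → ℝ) (hw : ∀ e, 0 ≤ w e) (d : V → V → ℝ)
    (hd : ∀ (x y : V) (p : G.Walk x y), p.IsPath → d x y = (p.edges.map w).sum) :
    ∀ x y z r : V, d x y + d z r ≤ max (d x z + d y r) (d x r + d y z) := by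
  classical
  -- existence of paths
  have hpath : ∀ a b : V, ∃ p : G.Walk a b, p.IsPath := fun a b =>
    (hG.existsUnique_path a b).exists
  -- d is bounded by any walk
  have hle : ∀ (a b : V) (q : G.Walk a b), d a b ≤ (q.edges.map w).sum := by
    intro a b q
    rw [hd a b q.bypass q.bypass_isPath]
    exact list_map_sum_le w hw q.bypass_isPath.isTrail.edges_nodup q.edges_bypass_subset
  -- symmetry
  have hsymm : ∀ a b : V, d a b = d b a := by
    intro a b
    obtain ⟨p, hp⟩ := hpath a b
    rw [hd a b p hp, hd b a p.reverse hp.reverse, edges_reverse, List.map_reverse,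
      List.sum_reverse]
  -- triangle inequality
  have htri : ∀ a b c : V, d a c ≤ d a b + d b c := by
    intro a b c
    obtain ⟨p, hp⟩ := hpath a b
    obtain ⟨q, hq⟩ := hpath b c
    have := hle a c (p.append q)
    rwa [edges_append, List.map_append, List.sum_append, ← hd a b p hp, ← hd b c q hq] at this
  -- splitting a path at an interior vertex
  have hsplit : ∀ (a b : V) (p : G.Walk a b), p.IsPath → ∀ v (hv : v ∈ p.support),
      d a b = d a v + d v b := by
    intro a b p hp v hv
    have hspec := p.take_spec hv
    have happ : ((p.takeUntil v hv).append (p.dropUntil v hv)).IsPath := by rw [hspec]; exact hp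
    have : d a b = (((p.takeUntil v hv).append (p.dropUntil v hv)).edges.map w).sum := by
      rw [hspec]; exact hd a b p hp
    rw [this, edges_append, List.map_append, List.sum_append,
      ← hd a v _ (hp.takeUntil hv), ← hd v b _ (hp.dropUntil hv)]
  -- appending internally disjoint paths gives a path
  have happend : ∀ {a b c : V} (s : G.Walk a b) (t : G.Walk b c), s.IsPath → t.IsPath →
      (∀ u ∈ s.support, u ∈ t.support → u = b) → (s.append t).IsPath := by
    intro a b c s t hs ht hdisj
    have hcons : t.support = b :: t.support.tail := t.support_eq_cons
    have htn : t.support.Nodup := ht.support_nodup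
    rw [hcons, List.nodup_cons] at htn
    rw [isPath_def, support_append, List.nodup_append]
    refine ⟨hs.support_nodup, htn.2, ?_⟩
    intro u hu u' hu' hne; subst hne
    have hub : u = b := hdisj u hu (List.mem_of_mem_tail hu')
    exact htn.1 (hub ▸ hu')
  -- first vertex of a walk lying in a given set
  have key : ∀ (S : Set V) {z x : V} (q : G.Walk z x), q.IsPath → x ∈ S →
      ∃ m, m ∈ S ∧ ∃ q1 : G.Walk z m, q1.IsPath ∧ q1.support ⊆ q.support ∧
        (∀ u ∈ q1.support, u ∈ S → u = m) := by
    intro S z x q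
    induction q with
    | nil =>
      intro _ hxS
      refine ⟨_, hxS, Walk.nil, IsPath.nil, by simp, ?_⟩
      intro u hu _
      simpa using hu
    | @cons z b x h q' ih =>
      intro hq hxS
      by_cases hz : z ∈ S
      · refine ⟨z, hz, Walk.nil, IsPath.nil, by simp, ?_⟩
        intro u hu _
        simpa using hu
      · obtain ⟨m, hm, q1, hq1, hsub, hcond⟩ := ih hq.of_cons hxS
        have hznot : z ∉ q'.support := ((cons_isPath_iff h q').mp hq).2
        refine ⟨m, hm, Walk.cons h q1, hq1.cons (fun hc => hznot (hsub hc)), ?_, ?_⟩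
        · rw [support_cons, support_cons]
          exact List.cons_subset_cons z hsub
        · intro u hu huS
          rw [support_cons, List.mem_cons] at hu
          rcases hu with rfl | hu
          · exact absurd huS hz
          · exact hcond u hu huS
  -- the median: for a path p : x → y and any z, there is m on p with
  -- d z x = d z m + d m x and d z y = d z m + d m y
  have hmed : ∀ (x y z : V) (p : G.Walk x y), p.IsPath →
      ∃ m, ∃ _ : m ∈ p.support, d z x = d z m + d m x ∧ d z y = d z m + d m y := by
    intro x y z p hp
    obtain ⟨q, hq⟩ := hpath z x
    obtain ⟨m, hm, q1, hq1, -, hcond⟩ :=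
      key {v | v ∈ p.support} q hq p.start_mem_support
    refine ⟨m, hm, ?_, ?_⟩
    · -- path z → x through m : q1 ++ (takeUntil m).reverse
      have ht : ((p.takeUntil m hm).reverse).IsPath := (hp.takeUntil hm).reverse
      have hdisj : ∀ u ∈ q1.support, u ∈ (p.takeUntil m hm).reverse.support → u = m := by
        intro u hu hu'
        rw [support_reverse, List.mem_reverse] at hu'
        exact hcond u hu (p.support_takeUntil_subset hm hu')
      have hfull := happend q1 _ hq1 ht hdisj
      rw [hd z x _ hfull, edges_append, List.map_append, List.sum_append,
        ← hd z m q1 hq1, ← hd m x _ ht]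
    · -- path z → y through m : q1 ++ dropUntil m
      have ht : (p.dropUntil m hm).IsPath := hp.dropUntil hm
      have hdisj : ∀ u ∈ q1.support, u ∈ (p.dropUntil m hm).support → u = m := by
        intro u hu hu'
        exact hcond u hu (p.support_dropUntil_subset hm hu')
      have hfull := happend q1 _ hq1 ht hdisj
      rw [hd z y _ hfull, edges_append, List.map_append, List.sum_append,
        ← hd z m q1 hq1, ← hd m y _ ht]
  -- main argument
  intro x y z r
  obtain ⟨p, hp⟩ := hpath x y
  obtain ⟨m1, hm1, hzx, hzy⟩ := hmed x y z p hp
  obtain ⟨m2, hm2, hrx, hry⟩ := hmed x y r p hp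
  have hxy1 : d x y = d x m1 + d m1 y := hsplit x y p hp m1 hm1
  have hxy2 : d x y = d x m2 + d m2 y := hsplit x y p hp m2 hm2
  -- where is m2 relative to m1 on p?
  have hm2' : m2 ∈ (p.takeUntil m1 hm1).support ∨ m2 ∈ (p.dropUntil m1 hm1).support := by
    have hspec := p.take_spec hm1
    have : m2 ∈ ((p.takeUntil m1 hm1).append (p.dropUntil m1 hm1)).support := by
      rw [hspec]; exact hm2
    rw [mem_support_append_iff] at this
    exact this
  rcases hm2' with hc | hc
  · -- m2 between x and m1 : show d x y + d z r ≤ d x z + d y r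
    have h1 : d x m1 = d x m2 + d m2 m1 :=
      hsplit x m1 (p.takeUntil m1 hm1) (hp.takeUntil hm1) m2 hc
    have htr1 : d z r ≤ d z m1 + d m1 r := htri z m1 r
    have htr2 : d m1 r ≤ d m1 m2 + d m2 r := htri m1 m2 r
    have s1 : d x z = d z x := (hsymm x z).trans rfl ▸ hsymm x z
    have e1 : d z x = d z m1 + d m1 x := hzx
    have e2 : d r x = d r m2 + d m2 x := hrx
    have e3 : d r y = d r m2 + d m2 y := hry
    have s2 : d x z = d z x := hsymm x z
    have s3 : d y r = d r y := hsymm y r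
    have s4 : d m1 x = d x m1 := hsymm m1 x
    have s5 : d m2 x = d x m2 := hsymm m2 x
    have s6 : d m1 m2 = d m2 m1 := hsymm m1 m2
    have s7 : d m2 r = d r m2 := hsymm m2 r
    refine le_max_of_le_left ?_
    linarith
  · -- m1 between x and m2 : show d x y + d z r ≤ d x r + d y z
    have h1 : d m1 y = d m1 m2 + d m2 y :=
      hsplit m1 y (p.dropUntil m1 hm1) (hp.dropUntil hm1) m2 hc
    have htr1 : d z r ≤ d z m1 + d m1 r := htri z m1 r
    have htr2 : d m1 r ≤ d m1 m2 + d m2 r := htri m1 m2 r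
    have e1 : d z x = d z m1 + d m1 x := hzx
    have e2 : d z y = d z m1 + d m1 y := hzy
    have e3 : d r x = d r m2 + d m2 x := hrx
    have s2 : d x r = d r x := hsymm x r
    have s3 : d y z = d z y := hsymm y z
    have s4 : d m2 x = d x m2 := hsymm m2 x
    have s5 : d x m1 = d m1 x := hsymm x m1
    have s6 : d m2 r = d r m2 := hsymm m2 r
    refine le_max_of_le_right ?_
    linarith
end

section
/- Möbius scalar multiplication is additive in the scalar: for all s, t ∈ ℝ and x ∈ 𝔹^d_c, (s+t) ⊗_c x = (s ⊗_c x) ⊕_c (t ⊗_c x). -/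
open Classical

open scoped RealInnerProductSpace

noncomputable def artanh (x : ℝ) : ℝ := (1 / 2) * Real.log ((1 + x) / (1 - x))

/-- Möbius addition on the Poincaré ball `𝔹^d_c`. -/
noncomputable def mobiusAdd {n : ℕ} (c : ℝ) (x y : EuclideanSpace ℝ (Fin n)) :
    EuclideanSpace ℝ (Fin n) :=
  (1 / (1 + 2 * c * ⟪x, y⟫ + c ^ 2 * ‖x‖ ^ 2 * ‖y‖ ^ 2)) •
    ((1 + 2 * c * ⟪x, y⟫ + c * ‖y‖ ^ 2) • x + (1 - c * ‖x‖ ^ 2) • y)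

/-- Möbius scalar multiplication on the Poincaré ball `𝔹^d_c`. -/
noncomputable def mobiusSMul {n : ℕ} (c t : ℝ) (x : EuclideanSpace ℝ (Fin n)) :
    EuclideanSpace ℝ (Fin n) :=
  if x = 0 then 0 else
    (Real.tanh (t * artanh (Real.sqrt c * ‖x‖)) / (Real.sqrt c * ‖x‖)) • x

lemma abs_tanh_lt_one' (a : ℝ) : |Real.tanh a| < 1 := by
  rw [Real.tanh_eq_sinh_div_cosh, abs_div, abs_of_pos (Real.cosh_pos a),
    div_lt_one (Real.cosh_pos a)]
  rcases abs_cases (Real.sinh a) with ⟨h, _⟩ | ⟨h, _⟩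
  · rw [h]; nlinarith [Real.exp_pos (-a), Real.cosh_sub_sinh a]
  · rw [h]; nlinarith [Real.exp_pos a, Real.cosh_add_sinh a]

lemma one_add_tanh_mul_tanh_pos (a b : ℝ) :
    0 < 1 + Real.tanh a * Real.tanh b := by
  nlinarith [abs_tanh_lt_one' a, abs_tanh_lt_one' b, abs_nonneg (Real.tanh a),
    abs_nonneg (Real.tanh b), abs_mul (Real.tanh a) (Real.tanh b),
    neg_abs_le (Real.tanh a * Real.tanh b)]

lemma tanh_add' (a b : ℝ) :
    Real.tanh (a + b) = (Real.tanh a + Real.tanh b) / (1 + Real.tanh a * Real.tanh b) := by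
  have hca := (Real.cosh_pos a).ne'
  have hcb := (Real.cosh_pos b).ne'
  have hd := (one_add_tanh_mul_tanh_pos a b).ne'
  rw [Real.tanh_eq_sinh_div_cosh, Real.tanh_eq_sinh_div_cosh, Real.tanh_eq_sinh_div_cosh,
    Real.sinh_add, Real.cosh_add] at *
  have hcab : Real.cosh a * Real.cosh b + Real.sinh a * Real.sinh b ≠ 0 := by
    intro h
    apply hd
    field_simp
    linarith
  field_simp

/-- The scalar distributive law of gyrovector spaces:
`(s + t) ⊗_c x = (s ⊗_c x) ⊕_c (t ⊗_c x)`. -/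
theorem mobiusSMul_add {n : ℕ} (c : ℝ) (hc : 0 < c) (s t : ℝ)
    (x : EuclideanSpace ℝ (Fin n)) (hx : Real.sqrt c * ‖x‖ < 1) :
    mobiusSMul c (s + t) x = mobiusAdd c (mobiusSMul c s x) (mobiusSMul c t x) := by
  by_cases hx0 : x = 0
  · simp [mobiusSMul, mobiusAdd, hx0]
  · have hxn : (0:ℝ) < ‖x‖ := norm_pos_iff.mpr hx0
    set r : ℝ := Real.sqrt c * ‖x‖ with hr
    have hrpos : 0 < r := mul_pos (Real.sqrt_pos.mpr hc) hxn
    set u : ℝ := artanh r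
    set p : ℝ := Real.tanh (s * u) with hp
    set q : ℝ := Real.tanh (t * u) with hq
    have hpq : 0 < 1 + p * q := one_add_tanh_mul_tanh_pos (s * u) (t * u)
    have hadd : Real.tanh ((s + t) * u) = (p + q) / (1 + p * q) := by
      rw [add_mul, tanh_add']
    have hr2 : r ^ 2 = c * ‖x‖ ^ 2 := by
      rw [hr, mul_pow, Real.sq_sqrt hc.le]
    simp only [mobiusSMul, if_neg hx0, mobiusAdd, ← hr, ← hp, ← hq]
    rw [real_inner_smul_left, real_inner_smul_right, real_inner_self_eq_norm_sq,
      norm_smul, norm_smul, smul_smul, smul_smul, ← add_smul, smul_smul, hadd]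
    congr 1
    simp only [Real.norm_eq_abs, mul_pow, sq_abs]
    have h1 : c * (p / r * (q / r * ‖x‖ ^ 2)) = p * q := by
      field_simp
      linear_combination (-1) * p * q * ‖x‖ ^ 2 * Real.sq_sqrt hc.le
    have h2 : c * ((p / r) ^ 2 * ‖x‖ ^ 2) = p ^ 2 := by
      field_simp
      linear_combination (-1) * p ^ 2 * ‖x‖ ^ 2 * Real.sq_sqrt hc.le
    have h3 : c * ((q / r) ^ 2 * ‖x‖ ^ 2) = q ^ 2 := by
      field_simp
      linear_combination (-1) * q ^ 2 * ‖x‖ ^ 2 * Real.sq_sqrt hc.le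
    have h4 : c ^ 2 * ((p / r) ^ 2 * ‖x‖ ^ 2) * ((q / r) ^ 2 * ‖x‖ ^ 2) = p ^ 2 * q ^ 2 := by
      field_simp
      linear_combination (-1) * (Real.sqrt c ^ 2 + c) * p ^ 2 * q ^ 2 * ‖x‖ ^ 4 * Real.sq_sqrt hc.le
    rw [show (2:ℝ) * c * (p / r * (q / r * ‖x‖ ^ 2)) = 2 * (p * q) by
      rw [mul_assoc, h1], h2, h3, h4]
    have hden : (1:ℝ) + 2 * (p * q) + p ^ 2 * q ^ 2 = (1 + p * q) ^ 2 := by ring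
    rw [hden]
    field_simp
    simp only [p, q, u]
    ring_nf
end
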